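/- arXiv:2110.11737 — 5 statements merged into one kernel-verified Lean document; each statement's English description precedes it below -/
import Mathlib

section
/- For every n×n real skew-symmetric matrix M there exists a probability vector p on {1,…,n} such that every entry of M p is at most 0. Consequently, every two-player zero-sum symmetric normal-form game admits a symmetric Nash equilibrium (p, p). -/
open Matrix

lemma skew_quad_zero {n : ℕ} (M : Matrix (Fin n) (Fin n) ℝ) (hM : Mᵀ = -M)
    (v : Fin n → ℝ) : ∑ i, v i * (M.mulVec v) i = 0 := by
  have h : ∀ i j, M j i = - M i j := by
    intro i j
    have := congrFun (congrFun hM i) j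
    simpa [Matrix.transpose_apply] using this
  have expand : ∑ i, v i * (M.mulVec v) i = ∑ i, ∑ j, v i * M i j * v j := by
    simp [Matrix.mulVec, dotProduct, Finset.mul_sum, mul_assoc]
  have key : (∑ i, ∑ j, v i * M i j * v j) = - ∑ i, ∑ j, v i * M i j * v j := by
    conv_lhs => rw [Finset.sum_comm]
    rw [← Finset.sum_neg_distrib]
    refine Finset.sum_congr rfl fun a _ => ?_
    rw [← Finset.sum_neg_distrib]
    refine Finset.sum_congr rfl fun b _ => ?_
    rw [h a b]; ring
  rw [expand]; linarith

/-- Every `n × n` real skew-symmetric matrix `M` (with `n ≥ 1`) admits a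
probability vector `p` with `M p ≤ 0` entrywise; i.e., every two-player zero-sum symmetric
normal-form game admits a symmetric Nash equilibrium `(p, p)`. -/
theorem exists_symmetric_nash
    (n : ℕ) (hn : 0 < n) (M : Matrix (Fin n) (Fin n) ℝ) (hM : Mᵀ = -M) :
    ∃ p : Fin n → ℝ, (∀ i, 0 ≤ p i) ∧ (∑ i, p i = 1) ∧
      (∀ i : Fin n, (M.mulVec p) i ≤ 0) := by
  by_contra hcon
  push_neg at hcon
  -- sets
  set Δ : Set (Fin n → ℝ) := stdSimplex ℝ (Fin n) with hΔ
  set C : Set (Fin n → ℝ) := (fun p => M.mulVec p) '' Δ with hC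
  set K : Set (Fin n → ℝ) := {x | ∀ i, x i ≤ 0} with hK
  have hKconv : Convex ℝ K := by
    intro x hx y hy a b ha hb _
    intro i
    have := hx i; have := hy i
    have : a * x i + b * y i ≤ 0 := by nlinarith
    simpa using this
  have hKclosed : IsClosed K := by
    have : K = ⋂ i, {x : Fin n → ℝ | x i ≤ 0} := by
      ext x; simp [hK, Set.mem_iInter]
    rw [this]
    exact isClosed_iInter fun i =>
      isClosed_le (continuous_apply i) continuous_const
  have hlin : IsLinearMap ℝ (fun p : Fin n → ℝ => M.mulVec p) :=
    ⟨fun x y => Matrix.mulVec_add M x y, fun c x => Matrix.mulVec_smul M c x⟩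
  have hCconv : Convex ℝ C := (convex_stdSimplex ℝ (Fin n)).is_linear_image hlin
  have hCcomp : IsCompact C :=
    (isCompact_stdSimplex ℝ (Fin n)).image (IsLinearMap.mk' _ hlin).continuous_of_finiteDimensional
  have hdisj : Disjoint K C := by
    rw [Set.disjoint_left]
    rintro x hx ⟨p, hp, rfl⟩
    obtain ⟨i, hi⟩ := hcon p hp.1 hp.2
    exact absurd (hx i) (not_le.mpr hi)
  obtain ⟨f, u, v, hfK, huv, hfC⟩ :=
    geometric_hahn_banach_closed_compact hKconv hKclosed hCconv hCcomp hdisj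
  have hu0 : 0 < u := by
    have : f 0 < u := hfK 0 (fun i => le_refl 0)
    simpa using this
  -- y i := f (e_i) is nonnegative
  set y : Fin n → ℝ := fun i => f (fun j => if i = j then 1 else 0) with hy
  have hynn : ∀ i, 0 ≤ y i := by
    intro i
    by_contra hneg
    push_neg at hneg
    -- take x = -t • e_i for large t
    set t : ℝ := (u + 1) / (-(y i)) with ht
    have hti : 0 < t := div_pos (by linarith) (by linarith)
    have hx : (fun j => if i = j then -t else 0) ∈ K := by
      intro j; by_cases h : i = j <;> simp [h, le_of_lt hti]
    have hfx := hfK _ hx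
    have : (fun j : Fin n => if i = j then -t else 0)
        = (-t) • (fun j => if i = j then (1:ℝ) else 0) := by
      funext j; by_cases h : i = j <;> simp [h]
    rw [this, _root_.map_smul] at hfx
    have : -t * y i < u := hfx
    have htval : -t * y i = u + 1 := by
      have hrw : -t * y i = t * (-y i) := by ring
      rw [hrw, ht, div_mul_cancel₀ _ (by linarith : -y i ≠ 0)]
    linarith
  have hfexp : ∀ x : Fin n → ℝ, f x = ∑ i, x i * y i := by
    intro x
    have := LinearMap.pi_apply_eq_sum_univ (f.toLinearMap) x
    simpa [smul_eq_mul, hy] using this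
  -- strict positivity on C
  have hpos : ∀ p ∈ Δ, 0 < ∑ i, (M.mulVec p) i * y i := by
    intro p hp
    have : v < f (M.mulVec p) := hfC _ ⟨p, hp, rfl⟩
    rw [hfexp] at this
    linarith
  -- y is not identically zero, normalize
  have hS : 0 < ∑ i, y i := by
    rcases lt_or_eq_of_le (Finset.sum_nonneg fun i _ => hynn i) with h | h
    · exact h
    · exfalso
      have hzero : ∀ i, y i = 0 := by
        intro i
        have := (Finset.sum_eq_zero_iff_of_nonneg (fun i _ => hynn i)).mp h.symm
        exact this i (Finset.mem_univ i)
      obtain ⟨p0, hp0⟩ : Δ.Nonempty := ⟨fun _ => (n : ℝ)⁻¹, by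
        constructor
        · intro i; positivity
        · simp [Finset.card_univ]
          field_simp⟩
      have := hpos p0 hp0
      simp [hzero] at this
  set q : Fin n → ℝ := fun i => y i / (∑ j, y j) with hq
  have hqΔ : q ∈ Δ := by
    constructor
    · intro i; exact div_nonneg (hynn i) (le_of_lt hS)
    · rw [← Finset.sum_div]; field_simp
  have h1 := hpos q hqΔ
  have h2 : ∑ i, (M.mulVec q) i * y i = (∑ j, y j) * ∑ i, q i * (M.mulVec q) i := by
    rw [Finset.mul_sum]
    refine Finset.sum_congr rfl fun i _ => ?_
    rw [hq]
    field_simp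
  rw [h2, skew_quad_zero M hM q, mul_zero] at h1
  exact lt_irrefl 0 h1
end

section
/- Let M be an n×n real skew-symmetric matrix. Let p_1, …, p_m be probability vectors on {1,…,n} constructed recursively as follows: with C_k denoting the support of p_k and X_k = {1,…,n} \ (C_1 ∪ ⋯ ∪ C_{k−1}), assume each p_k is supported in X_k and satisfies (M p_k)_i ≤ 0 for every i ∈ X_k (i.e., p_k is a symmetric Nash equilibrium strategy of the game restricted to X_k), as in Nash Clustering. Define NPP(C_i, C_j) = p_iᵀ M p_j. Then NPP(C_i, C_j) ≥ 0 whenever i ≤ j, and NPP(C_i, C_j) ≤ 0 whenever i > j. -/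
open Matrix

/-! For `j < i` the support of `p i` lies in `X i ⊆ X j`, where `p j` is an equilibrium, so
`(M p j)` is nonpositive wherever `p i` puts mass and `p iᵀ M p j ≤ 0`. Skew-symmetry turns this
into `p jᵀ M p i ≥ 0` and makes every self-pairing `p iᵀ M p i` vanish. -/

section SkewSymmetric

variable {ι R : Type*} [Fintype ι] [CommRing R] {M : Matrix ι ι R}

theorem dotProduct_mulVec_eq_neg_of_transpose_eq_neg (hM : Mᵀ = -M) (u v : ι → R) :
    u ⬝ᵥ M *ᵥ v = -(v ⬝ᵥ M *ᵥ u) := by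
  rw [dotProduct_mulVec, ← mulVec_transpose, hM, neg_mulVec, neg_dotProduct, dotProduct_comm]

theorem dotProduct_mulVec_self_of_transpose_eq_neg [NoZeroDivisors R] [CharZero R]
    (hM : Mᵀ = -M) (u : ι → R) : u ⬝ᵥ M *ᵥ u = 0 :=
  self_eq_neg.mp (dotProduct_mulVec_eq_neg_of_transpose_eq_neg hM u u)

end SkewSymmetric

theorem dotProduct_nonpos_of_nonpos_on_support {ι R : Type*} [Fintype ι] [CommRing R]
    [PartialOrder R] [IsOrderedRing R] {u w : ι → R} (hu : ∀ i, 0 ≤ u i)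
    (hw : ∀ i, u i ≠ 0 → w i ≤ 0) : u ⬝ᵥ w ≤ 0 := by
  refine Finset.sum_nonpos fun i _ => ?_
  rcases eq_or_ne (u i) 0 with hi | hi
  · simp [hi]
  · exact mul_nonpos_of_nonneg_of_nonpos (hu i) (hw i hi)

theorem npp_nonpos_of_lt {n m : ℕ} (M : Matrix (Fin n) (Fin n) ℝ) (p : Fin m → Fin n → ℝ)
    (hp0 : ∀ k i, 0 ≤ p k i)
    (hsupp : ∀ k : Fin m, ∀ i : Fin n, (∃ l : Fin m, l < k ∧ p l i ≠ 0) → p k i = 0)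
    (hNE : ∀ k : Fin m, ∀ i : Fin n, (∀ l : Fin m, l < k → p l i = 0) →
      (M.mulVec (p k)) i ≤ 0)
    {i j : Fin m} (hji : j < i) : p i ⬝ᵥ M *ᵥ p j ≤ 0 := by
  refine dotProduct_nonpos_of_nonpos_on_support (hp0 i) fun k hk => hNE j k fun l hlj => ?_
  by_contra hlk
  exact hk (hsupp i k ⟨l, hlj.trans hji, hlk⟩)

theorem npp_ordering_of_nash_clustering_general
    (n m : ℕ) (M : Matrix (Fin n) (Fin n) ℝ) (hM : Mᵀ = -M)
    (p : Fin m → Fin n → ℝ)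
    (hp0 : ∀ k i, 0 ≤ p k i)
    (hsupp : ∀ k : Fin m, ∀ i : Fin n, (∃ l : Fin m, l < k ∧ p l i ≠ 0) → p k i = 0)
    (hNE : ∀ k : Fin m, ∀ i : Fin n, (∀ l : Fin m, l < k → p l i = 0) →
      (M.mulVec (p k)) i ≤ 0) :
    ∀ i j : Fin m,
      (i ≤ j → 0 ≤ p i ⬝ᵥ M.mulVec (p j)) ∧
      (j < i → p i ⬝ᵥ M.mulVec (p j) ≤ 0) := by
  intro i j
  refine ⟨fun hij => ?_, npp_nonpos_of_lt M p hp0 hsupp hNE⟩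
  rcases hij.eq_or_lt with rfl | hij
  · exact (dotProduct_mulVec_self_of_transpose_eq_neg hM (p i)).ge
  · rw [dotProduct_mulVec_eq_neg_of_transpose_eq_neg hM]
    exact neg_nonneg.mpr (npp_nonpos_of_lt M p hp0 hsupp hNE hij)

/-- **Theorem on NPP / Nash Clustering.** Let `M` be skew-symmetric and let
`p 0, …, p (m-1)` be probability vectors produced by Nash Clustering: each `p k` is supported
in `X k = {1,…,n} \ (C 0 ∪ ⋯ ∪ C (k-1))` (where `C l` is the support of `p l`), and
`(M (p k)) i ≤ 0` for every `i ∈ X k`, i.e. `p k` is a symmetric Nash equilibrium strategy of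
the game restricted to `X k`. With `NPP(C i, C j) = (p i)ᵀ M (p j)`, we have
`NPP(C i, C j) ≥ 0` whenever `i ≤ j` and `NPP(C i, C j) ≤ 0` whenever `i > j`. -/
theorem npp_ordering_of_nash_clustering
    (n m : ℕ) (M : Matrix (Fin n) (Fin n) ℝ) (hM : Mᵀ = -M)
    (p : Fin m → Fin n → ℝ)
    (hp0 : ∀ k i, 0 ≤ p k i) (hp1 : ∀ k, ∑ i, p k i = 1)
    (hsupp : ∀ k : Fin m, ∀ i : Fin n, (∃ l : Fin m, l < k ∧ p l i ≠ 0) → p k i = 0)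
    (hNE : ∀ k : Fin m, ∀ i : Fin n, (∀ l : Fin m, l < k → p l i = 0) →
      (M.mulVec (p k)) i ≤ 0) :
    ∀ i j : Fin m,
      (i ≤ j → 0 ≤ p i ⬝ᵥ M.mulVec (p j)) ∧
      (j < i → p i ⬝ᵥ M.mulVec (p j) ≤ 0) :=
  npp_ordering_of_nash_clustering_general n m M hM p hp0 hsupp hNE
end

section
/- Let S be a finite strategy set with |S| ≥ 2, let M : S × S → ℝ be skew-symmetric (M(s,t) = −M(t,s) for all s,t), and suppose S is partitioned into k nonempty, pairwise disjoint layers L_1, …, L_k such that M(s_1, s_2) > 0 for all s_1 ∈ L_i, s_2 ∈ L_j whenever i < j (every strategy in an earlier layer beats every strategy in any later layer). Define the win-rate of a strategy s as TS(s) = (1/(|S|−1)) ∑_{z ∈ S} 1[M(s,z) > 0]. Then for all i < j, every s ∈ L_i and every t ∈ L_j satisfy TS(s) > TS(t). -/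
/-- The win-rate of strategy `s`: the fraction of strategies `z` in the whole strategy
space that `s` beats (`M s z > 0`), normalized by `|S| - 1`. -/
noncomputable def winRate {S : Type*} [Fintype S] (M : S → S → ℝ) (s : S) : ℝ :=
  (1 / ((Fintype.card S : ℝ) - 1)) * ∑ z : S, (if 0 < M s z then (1 : ℝ) else 0)

/-!
Everything a strategy `t` of layer `j` beats lies in a layer after `j` (skew-symmetry rules out
beating an earlier layer), hence is also beaten by any `s` of an earlier layer `i`. So the set of
strategies beaten by `t` is contained in the set beaten by `s`, and strictly so: `s` beats `t`,
while `t` does not beat itself.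
-/

open Finset

namespace winRate

variable {S : Type*} [Fintype S]

noncomputable def defeated (M : S → S → ℝ) (s : S) : Finset S :=
  univ.filter fun z => 0 < M s z

@[simp]
theorem mem_defeated {M : S → S → ℝ} {s z : S} : z ∈ defeated M s ↔ 0 < M s z := by
  simp [defeated]

theorem eq_card_defeated_div (M : S → S → ℝ) (s : S) :
    winRate M s = #(defeated M s) / ((Fintype.card S : ℝ) - 1) := by
  rw [_root_.winRate, sum_boole, one_div_mul_eq_div, defeated]

theorem lt_of_defeated_ssubset (hcard : 2 ≤ Fintype.card S) {M : S → S → ℝ} {s t : S}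
    (h : defeated M t ⊂ defeated M s) : winRate M t < winRate M s := by
  have hpos : (0 : ℝ) < (Fintype.card S : ℝ) - 1 := by
    have : (2 : ℝ) ≤ Fintype.card S := by exact_mod_cast hcard
    linarith
  rw [eq_card_defeated_div, eq_card_defeated_div]
  gcongr

theorem notMem_defeated_self {M : S → S → ℝ} (hskew : ∀ s t, M s t = -M t s) (s : S) :
    s ∉ defeated M s := by
  have := hskew s s
  simp only [mem_defeated, not_lt]
  linarith

section Layers

variable {M : S → S → ℝ} {ι : Type*} [LinearOrder ι] {L : ι → Finset S}
  (hskew : ∀ s t, M s t = -M t s)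
  (hbeat : ∀ i j : ι, i < j → ∀ s₁ ∈ L i, ∀ s₂ ∈ L j, 0 < M s₁ s₂)
include hskew hbeat

theorem layer_le_of_mem_defeated {j l : ι} {t z : S} (ht : t ∈ L j) (hz : z ∈ L l)
    (hbeaten : z ∈ defeated M t) : j ≤ l := by
  by_contra! hlj
  have := hbeat l j hlj z hz t ht
  rw [mem_defeated, hskew] at hbeaten
  linarith

theorem defeated_ssubset_of_layer_lt (hcover : ∀ s : S, ∃ i, s ∈ L i) {i j : ι}
    (hij : i < j) {s t : S} (hs : s ∈ L i) (ht : t ∈ L j) : defeated M t ⊂ defeated M s := by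
  refine ssubset_of_subset_of_ne (fun z hz => ?_) fun heq => ?_
  · obtain ⟨l, hl⟩ := hcover z
    have hjl := layer_le_of_mem_defeated hskew hbeat ht hl hz
    exact mem_defeated.2 (hbeat i l (hij.trans_le hjl) s hs z hl)
  · have hst : t ∈ defeated M s := mem_defeated.2 (hbeat i j hij s hs t ht)
    exact notMem_defeated_self hskew t (heq ▸ hst)

end Layers

end winRate

theorem winRate_strict_anti_of_layers_general
    {S : Type*} [Fintype S] (hcard : 2 ≤ Fintype.card S)
    (M : S → S → ℝ) (hskew : ∀ s t, M s t = -M t s)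
    (k : ℕ) (L : Fin k → Finset S)
    (hcover : ∀ s : S, ∃ i, s ∈ L i)
    (hbeat : ∀ i j : Fin k, i < j → ∀ s₁ ∈ L i, ∀ s₂ ∈ L j, 0 < M s₁ s₂) :
    ∀ i j : Fin k, i < j → ∀ s ∈ L i, ∀ t ∈ L j, winRate M t < winRate M s :=
  fun _ _ hij _ hs _ ht =>
    winRate.lt_of_defeated_ssubset hcard
      (winRate.defeated_ssubset_of_layer_lt hskew hbeat hcover hij hs ht)

/-- Let `S` be a finite strategy set with `|S| ≥ 2`, `M` skew-symmetric,
and `L 1, …, L k` a partition of `S` into nonempty pairwise-disjoint layers such that every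
strategy in an earlier layer beats every strategy in any later layer. Then for `i < j`, every
`s ∈ L i` has strictly greater win-rate than every `t ∈ L j`. -/
theorem winRate_strict_anti_of_layers
    {S : Type*} [Fintype S] (hcard : 2 ≤ Fintype.card S)
    (M : S → S → ℝ) (hskew : ∀ s t, M s t = -M t s)
    (k : ℕ) (L : Fin k → Finset S)
    (hne : ∀ i, (L i).Nonempty)
    (hdisj : ∀ i j, i ≠ j → Disjoint (L i) (L j))
    (hcover : ∀ s : S, ∃ i, s ∈ L i)
    (hbeat : ∀ i j : Fin k, i < j → ∀ s₁ ∈ L i, ∀ s₂ ∈ L j, 0 < M s₁ s₂) :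
    ∀ i j : Fin k, i < j → ∀ s ∈ L i, ∀ t ∈ L j, winRate M t < winRate M s :=
  winRate_strict_anti_of_layers_general hcard M hskew k L hcover hbeat
end

section
/- Let S be a finite strategy set with |S| ≥ 2, let M : S × S → ℝ be skew-symmetric (M(s,t) = −M(t,s)), and suppose S is partitioned into k nonempty, pairwise disjoint layers L_1, …, L_k such that M(s_1, s_2) > 0 for all s_1 ∈ L_i, s_2 ∈ L_j whenever i < j. Define the transitive strength of a layer L_i as the average win-rate (1/|L_i|) ∑_{s ∈ L_i} TS(s), where TS(s) = (1/(|S|−1)) ∑_{z ∈ S} 1[M(s,z) > 0]. Then the transitive strengths of the layers are strictly decreasing: for all i < j, (1/|L_i|) ∑_{s ∈ L_i} TS(s) > (1/|L_j|) ∑_{t ∈ L_j} TS(t). -/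
/-- The transitive strength of a layer `L`: the average win-rate of the strategies in `L`. -/
noncomputable def layerStrength {S : Type*} [Fintype S] (M : S → S → ℝ) (L : Finset S) : ℝ :=
  (1 / (L.card : ℝ)) * ∑ s ∈ L, winRate M s

/-!
A strategy `s` in an earlier layer beats a strategy `t` in a later layer, and it beats every
strategy that `t` beats: nothing in a layer before `t`'s can lose to `t`, and everything from
`t`'s layer on lies strictly after `s`'s layer. Since `t` does not beat itself, the set of
strategies beaten by `t` is a proper subset of those beaten by `s`, so every win-rate in the
later layer is below every win-rate in the earlier one, and so are the averages.
-/

open Finset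
open scoped BigOperators

section

variable {S : Type*} [Fintype S]

noncomputable def beatenBy (M : S → S → ℝ) (s : S) : Finset S :=
  open Classical in {z | 0 < M s z}

theorem winRate_eq_card_beatenBy (M : S → S → ℝ) (s : S) :
    winRate M s = ((Fintype.card S : ℝ) - 1)⁻¹ * #(beatenBy M s) := by
  classical
  simp only [winRate, beatenBy, one_div, sum_boole]

theorem winRate_lt_winRate_of_beatenBy_ssubset (hcard : 1 < Fintype.card S)
    {M : S → S → ℝ} {s t : S} (h : beatenBy M t ⊂ beatenBy M s) :
    winRate M t < winRate M s := by
  have hpos : (0 : ℝ) < (Fintype.card S : ℝ) - 1 := by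
    rw [sub_pos]
    exact_mod_cast hcard
  rw [winRate_eq_card_beatenBy, winRate_eq_card_beatenBy]
  gcongr

theorem layerStrength_eq_expect (M : S → S → ℝ) (L : Finset S) :
    layerStrength M L = 𝔼 s ∈ L, winRate M s := by
  rw [layerStrength, expect_eq_sum_div_card, one_div_mul_eq_div]

theorem layerStrength_lt_layerStrength {M : S → S → ℝ} {A B : Finset S}
    (hA : A.Nonempty) (hB : B.Nonempty) (h : ∀ a ∈ A, ∀ b ∈ B, winRate M b < winRate M a) :
    layerStrength M B < layerStrength M A := by
  obtain ⟨b, hb, hb_max⟩ := B.exists_max_image (winRate M) hB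
  obtain ⟨a, ha, ha_min⟩ := A.exists_min_image (winRate M) hA
  rw [layerStrength_eq_expect, layerStrength_eq_expect]
  calc 𝔼 x ∈ B, winRate M x ≤ winRate M b := expect_le hB hb_max
    _ < winRate M a := h a ha b hb
    _ ≤ 𝔼 x ∈ A, winRate M x := le_expect hA ha_min

section Layers

variable {M : S → S → ℝ} {ι : Type*} [LinearOrder ι] {L : ι → Finset S}

theorem beatenBy_ssubset_of_mem_layers (hskew : ∀ s t, M s t = -M t s)
    (hcover : ∀ s : S, ∃ i, s ∈ L i)
    (hbeat : ∀ i j : ι, i < j → ∀ s₁ ∈ L i, ∀ s₂ ∈ L j, 0 < M s₁ s₂)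
    {i j : ι} (hij : i < j) {s t : S} (hs : s ∈ L i) (ht : t ∈ L j) :
    beatenBy M t ⊂ beatenBy M s := by
  classical
  refine _root_.ssubset_iff_subset_ne.mpr ⟨fun z hz => ?_, fun heq => ?_⟩
  · simp only [beatenBy, mem_filter, mem_univ, true_and] at hz ⊢
    obtain ⟨m, hzm⟩ := hcover z
    rcases lt_or_ge m j with hmj | hjm
    · linarith [hbeat m j hmj z hzm t ht, hskew t z]
    · exact hbeat i m (hij.trans_le hjm) s hs z hzm
  · have hst : t ∈ beatenBy M s := by
      simpa [beatenBy] using hbeat i j hij s hs t ht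
    rw [← heq] at hst
    simp [beatenBy, self_eq_neg.mp (hskew t t)] at hst

end Layers

end

theorem layerStrength_strict_anti_of_layers_general
    {S : Type*} [Fintype S]
    (M : S → S → ℝ) (hskew : ∀ s t, M s t = -M t s)
    (k : ℕ) (L : Fin k → Finset S)
    (hne : ∀ i, (L i).Nonempty)
    (hcover : ∀ s : S, ∃ i, s ∈ L i)
    (hbeat : ∀ i j : Fin k, i < j → ∀ s₁ ∈ L i, ∀ s₂ ∈ L j, 0 < M s₁ s₂) :
    ∀ i j : Fin k, i < j → layerStrength M (L j) < layerStrength M (L i) := by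
  intro i j hij
  refine layerStrength_lt_layerStrength (hne i) (hne j) fun s hs t ht => ?_
  have hst : s ≠ t := by
    rintro rfl
    linarith [hbeat i j hij s hs s ht, hskew s s]
  have : Nontrivial S := ⟨⟨s, t, hst⟩⟩
  exact winRate_lt_winRate_of_beatenBy_ssubset Fintype.one_lt_card
    (beatenBy_ssubset_of_mem_layers hskew hcover hbeat hij hs ht)

/-- Let `S` be a finite strategy set with `|S| ≥ 2`, `M` skew-symmetric, and
`L 1, …, L k` a partition of `S` into nonempty pairwise-disjoint layers where every strategy in
an earlier layer beats every strategy in any later layer. Then the transitive strengths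
(average win-rates) of the layers are strictly decreasing in the layer index. -/
theorem layerStrength_strict_anti_of_layers
    {S : Type*} [Fintype S] (hcard : 2 ≤ Fintype.card S)
    (M : S → S → ℝ) (hskew : ∀ s t, M s t = -M t s)
    (k : ℕ) (L : Fin k → Finset S)
    (hne : ∀ i, (L i).Nonempty)
    (hdisj : ∀ i j, i ≠ j → Disjoint (L i) (L j))
    (hcover : ∀ s : S, ∃ i, s ∈ L i)
    (hbeat : ∀ i j : Fin k, i < j → ∀ s₁ ∈ L i, ∀ s₂ ∈ L j, 0 < M s₁ s₂) :
    ∀ i j : Fin k, i < j → layerStrength M (L j) < layerStrength M (L i) :=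
  layerStrength_strict_anti_of_layers_general M hskew k L hne hcover hbeat
end

section
/- Let U be a finite set of size m = h·k partitioned into k pairwise disjoint blocks H_1, …, H_k, each of size h, and let 1 ≤ d ≤ h. Consider the two-stage uniform sampling procedure: independently for each i ∈ {1,…,k}, a d-element subset t_i ⊆ H_i is chosen uniformly at random; then a d-element subset F of the union G = t_1 ∪ ⋯ ∪ t_k (which has size d·k) is chosen uniformly at random. Then for every fixed element u ∈ U, the probability that u ∈ F equals d/m; equivalently, counting over all outcomes (t_1, …, t_k, F) of the procedure, m times the number of outcomes with u ∈ F equals d times the total number of outcomes. Hence the two-stage procedure samples d elements such that each element of U is included with the same probability d/m as direct uniform sampling. -/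
open scoped Classical

private lemma aux_powerset_count {α : Type*} [DecidableEq α] (G : Finset α) (d : ℕ)
    (hd : 1 ≤ d) (u : α) (hu : u ∈ G) :
    ((G.powersetCard d).filter (fun F => u ∈ F)).card = (G.card - 1).choose (d - 1) := by
  rw [← Finset.card_erase_of_mem hu, ← Finset.card_powersetCard (d-1) (G.erase u)]
  apply Finset.card_bij (fun F _ => F.erase u)
  · intro F hF
    simp only [Finset.mem_filter, Finset.mem_powersetCard] at hF
    rw [Finset.mem_powersetCard]
    exact ⟨Finset.erase_subset_erase u hF.1.1,
      by rw [Finset.card_erase_of_mem hF.2, hF.1.2]⟩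
  · intro F₁ h₁ F₂ h₂ hEq
    simp only [Finset.mem_filter] at h₁ h₂
    rw [← Finset.insert_erase h₁.2, hEq, Finset.insert_erase h₂.2]
  · intro s hs
    rw [Finset.mem_powersetCard] at hs
    have hus : u ∉ s := fun hx => (Finset.mem_erase.mp (hs.1 hx)).1 rfl
    refine ⟨insert u s, ?_, ?_⟩
    · simp only [Finset.mem_filter, Finset.mem_powersetCard]
      refine ⟨⟨Finset.insert_subset hu (hs.1.trans (Finset.erase_subset u G)), ?_⟩,
        Finset.mem_insert_self u s⟩
      rw [Finset.card_insert_of_notMem hus, hs.2]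
      omega
    · exact Finset.erase_insert hus

/-- **two-stage uniform sampling.** Let `U` (here, all of `α`) be a set of
`m = h·k` objects partitioned into `k` pairwise disjoint blocks `H 1, …, H k` of size `h`
each, and let `1 ≤ d ≤ h`. An outcome of the two-stage procedure is a tuple
`(t, F)` where each `t i` is a `d`-element subset of `H i` and `F` is a `d`-element subset
of `G = t 1 ∪ ⋯ ∪ t k`. Then for every fixed `u`, counting over all outcomes,
`m ·` (number of outcomes with `u ∈ F`) `= d ·` (total number of outcomes);
i.e. each element is included in `F` with probability `d / m`, the same as direct
uniform sampling. -/
theorem two_stage_uniform_sampling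
    {α : Type*} [Fintype α] [DecidableEq α]
    (h k d m : ℕ) (hm : m = h * k) (hd1 : 1 ≤ d) (hdh : d ≤ h)
    (H : Fin k → Finset α)
    (hHcard : ∀ i, (H i).card = h)
    (hHdisj : ∀ i j, i ≠ j → Disjoint (H i) (H j))
    (hHcover : ∀ x : α, ∃ i, x ∈ H i)
    (u : α) :
    m * ((Finset.univ.filter
            (fun o : (Fin k → Finset α) × Finset α =>
              (∀ i, o.1 i ⊆ H i ∧ (o.1 i).card = d) ∧
              o.2 ⊆ Finset.univ.biUnion o.1 ∧ o.2.card = d)).filter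
          (fun o => u ∈ o.2)).card =
    d * (Finset.univ.filter
          (fun o : (Fin k → Finset α) × Finset α =>
            (∀ i, o.1 i ⊆ H i ∧ (o.1 i).card = d) ∧
            o.2 ⊆ Finset.univ.biUnion o.1 ∧ o.2.card = d)).card := by
  obtain ⟨i0, hu0⟩ := hHcover u
  have hk1 : 1 ≤ k := i0.pos
  set P : (Fin k → Finset α) × Finset α → Prop := fun o =>
    (∀ i, o.1 i ⊆ H i ∧ (o.1 i).card = d) ∧
    o.2 ⊆ Finset.univ.biUnion o.1 ∧ o.2.card = d with hP
  set S := Finset.univ.filter P with hS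
  set T := Fintype.piFinset (fun i => (H i).powersetCard d) with hT
  -- membership in T
  have hTmem : ∀ t : Fin k → Finset α, t ∈ T ↔ ∀ i, t i ⊆ H i ∧ (t i).card = d := by
    intro t
    simp [hT, Fintype.mem_piFinset, Finset.mem_powersetCard]
  -- G size for t ∈ T
  have hGcard : ∀ t ∈ T, (Finset.univ.biUnion t).card = d * k := by
    intro t ht
    rw [hTmem] at ht
    rw [Finset.card_biUnion]
    · simp only [(fun i => (ht i).2)]
      simp [Finset.card_univ, mul_comm]
    · intro i _ j _ hij
      exact Finset.disjoint_of_subset_left (ht i).1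
        (Finset.disjoint_of_subset_right (ht j).1 (hHdisj i j hij))
  -- fst is in T
  have hfst : ∀ o ∈ S, o.1 ∈ T := by
    intro o ho
    rw [hS, Finset.mem_filter] at ho
    rw [hTmem]
    exact ho.2.1
  -- total count
  have htotal : S.card = T.card * (d * k).choose d := by
    rw [Finset.card_eq_sum_card_fiberwise hfst]
    rw [Finset.sum_congr rfl (fun t ht => ?_), Finset.sum_const, smul_eq_mul]
    show (S.filter (fun o => o.1 = t)).card = (d*k).choose d
    rw [← hGcard t ht, ← Finset.card_powersetCard]
    apply Finset.card_bij (fun o _ => o.2)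
    · intro o ho
      simp only [Finset.mem_filter, hS] at ho
      rw [Finset.mem_powersetCard, ← ho.2]
      exact ho.1.2.2
    · intro o₁ h₁ o₂ h₂ hEq
      simp only [Finset.mem_filter] at h₁ h₂
      exact Prod.ext (h₁.2.trans h₂.2.symm) hEq
    · intro F hF
      rw [Finset.mem_powersetCard] at hF
      refine ⟨(t, F), Finset.mem_filter.mpr ⟨Finset.mem_filter.mpr
        ⟨Finset.mem_univ _, ⟨(hTmem t).mp ht, hF.1, hF.2⟩⟩, rfl⟩, rfl⟩
  -- favorable count, fiberwise
  have hfav : (S.filter (fun o => u ∈ o.2)).card =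
      (T.filter (fun t => u ∈ t i0)).card * (d * k - 1).choose (d - 1) := by
    have hsub : ∀ o ∈ S.filter (fun o => u ∈ o.2), o.1 ∈ T :=
      fun o ho => hfst o (Finset.mem_filter.mp ho).1
    rw [Finset.card_eq_sum_card_fiberwise hsub]
    rw [← Finset.sum_filter_add_sum_filter_not T (fun t => u ∈ t i0)]
    have hzero : ∀ t ∈ T.filter (fun t => ¬ u ∈ t i0),
        ((S.filter (fun o => u ∈ o.2)).filter (fun o => o.1 = t)).card = 0 := by
      intro t ht
      simp only [Finset.mem_filter] at ht
      rw [Finset.card_eq_zero, Finset.filter_eq_empty_iff]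
      rintro o ho rfl
      simp only [Finset.mem_filter, hS, hP] at ho
      have huG : u ∈ Finset.univ.biUnion o.1 := ho.1.2.2.1 ho.2
      rw [Finset.mem_biUnion] at huG
      obtain ⟨j, _, huj⟩ := huG
      have : j = i0 := by
        by_contra hne
        exact absurd hu0 (Finset.disjoint_left.mp (hHdisj j i0 hne) ((ho.1.2.1 j).1 huj))
      exact ht.2 (this ▸ huj)
    rw [Finset.sum_congr rfl hzero, Finset.sum_const_zero, add_zero]
    rw [Finset.sum_congr rfl (fun t ht => ?_), Finset.sum_const, smul_eq_mul]
    -- fiber for t with u ∈ t i0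
    simp only [Finset.mem_filter] at ht
    show ((S.filter (fun o => u ∈ o.2)).filter (fun o => o.1 = t)).card
        = (d*k - 1).choose (d-1)
    have huG : u ∈ Finset.univ.biUnion t :=
      Finset.mem_biUnion.mpr ⟨i0, Finset.mem_univ _, ht.2⟩
    have hG' := hGcard t ht.1
    rw [← hG', ← aux_powerset_count (Finset.univ.biUnion t) d hd1 u huG]
    apply Finset.card_bij (fun o _ => o.2)
    · intro o ho
      simp only [Finset.mem_filter, hS] at ho
      rw [Finset.mem_filter, Finset.mem_powersetCard, ← ho.2]
      exact ⟨⟨ho.1.1.2.2.1, ho.1.1.2.2.2⟩, ho.1.2⟩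
    · intro o₁ h₁ o₂ h₂ hEq
      simp only [Finset.mem_filter] at h₁ h₂
      exact Prod.ext (h₁.2.trans h₂.2.symm) hEq
    · intro F hF
      simp only [Finset.mem_filter, Finset.mem_powersetCard] at hF
      refine ⟨(t, F), Finset.mem_filter.mpr ⟨Finset.mem_filter.mpr
        ⟨Finset.mem_filter.mpr ⟨Finset.mem_univ _,
          ⟨(hTmem t).mp ht.1, hF.1.1, hF.1.2⟩⟩, hF.2⟩, rfl⟩, rfl⟩
  -- count of T
  have hTcard : T.card = (h.choose d) ^ k := by
    rw [hT, Fintype.card_piFinset]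
    simp [Finset.card_powersetCard, hHcard]
  -- count of filtered T
  have hTfcard : (T.filter (fun t => u ∈ t i0)).card
      = (h - 1).choose (d - 1) * (h.choose d) ^ (k - 1) := by
    have hset : T.filter (fun t => u ∈ t i0) =
        Fintype.piFinset (Function.update (fun i => (H i).powersetCard d) i0
          (((H i0).powersetCard d).filter (fun s => u ∈ s))) := by
      ext t
      simp only [Finset.mem_filter, Fintype.mem_piFinset, hT]
      constructor
      · rintro ⟨h1, h2⟩ i
        rcases eq_or_ne i i0 with rfl | hne
        · simp [Function.update_self, Finset.mem_filter, h1 i, h2]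
        · simp [Function.update_of_ne hne, h1 i]
      · intro h1
        constructor
        · intro i
          rcases eq_or_ne i i0 with rfl | hne
          · have := h1 i; rw [Function.update_self, Finset.mem_filter] at this
            exact this.1
          · have := h1 i; rwa [Function.update_of_ne hne] at this
        · have := h1 i0; rw [Function.update_self, Finset.mem_filter] at this
          exact this.2
    rw [hset, Fintype.card_piFinset,
      ← Finset.mul_prod_erase Finset.univ _ (Finset.mem_univ i0)]
    rw [Function.update_self, aux_powerset_count _ d hd1 u hu0, hHcard i0]
    congr 1
    rw [Finset.prod_congr rfl (fun i hi => by
      rw [Function.update_of_ne (Finset.mem_erase.mp hi).1, Finset.card_powersetCard,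
        hHcard]), Finset.prod_const]
    congr 1
    rw [Finset.card_erase_of_mem (Finset.mem_univ i0), Finset.card_univ, Fintype.card_fin]
  -- final arithmetic
  rw [htotal, hfav, hTcard, hTfcard, hm]
  have e1 : h * (h - 1).choose (d - 1) = h.choose d * d := by
    have : (h-1).succ * (h-1).choose (d-1) = (h-1).succ.choose (d-1).succ * (d-1).succ :=
      Nat.add_one_mul_choose_eq (h - 1) (d - 1)
    have hh : (h-1).succ = h := by
      rw [Nat.succ_eq_add_one, Nat.sub_add_cancel (hd1.trans hdh)]
    have hdd : (d-1).succ = d := by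
      rw [Nat.succ_eq_add_one, Nat.sub_add_cancel hd1]
    rwa [hh, hdd] at this
  have e2 : (d * k) * (d * k - 1).choose (d - 1) = (d * k).choose d * d := by
    have hdk : 1 ≤ d * k := Nat.one_le_iff_ne_zero.mpr
      (Nat.mul_ne_zero (Nat.one_le_iff_ne_zero.mp hd1) (Nat.one_le_iff_ne_zero.mp hk1))
    have : (d*k-1).succ * (d*k-1).choose (d-1) = (d*k-1).succ.choose (d-1).succ * (d-1).succ :=
      Nat.add_one_mul_choose_eq (d * k - 1) (d - 1)
    have hh : (d*k-1).succ = d*k := by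
      rw [Nat.succ_eq_add_one, Nat.sub_add_cancel hdk]
    have hdd : (d-1).succ = d := by
      rw [Nat.succ_eq_add_one, Nat.sub_add_cancel hd1]
    rwa [hh, hdd] at this
  have e3 : k * (d * k - 1).choose (d - 1) = (d * k).choose d := by
    apply Nat.eq_of_mul_eq_mul_right hd1
    calc k * (d * k - 1).choose (d - 1) * d
        = d * ((d * k) * (d * k - 1).choose (d - 1)) / d := by
          rw [Nat.mul_div_cancel_left _ hd1]; ring
      _ = (d * k).choose d * d := by rw [e2, Nat.mul_div_cancel_left _ hd1]
  have hpow : h.choose d ^ k = h.choose d ^ (k - 1) * h.choose d := by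
    rw [← pow_succ]
    congr 1
    exact (Nat.sub_add_cancel hk1).symm
  rw [hpow]
  calc h * k * ((h-1).choose (d-1) * h.choose d ^ (k-1) * (d*k - 1).choose (d-1))
      = (h * (h-1).choose (d-1)) * (k * (d*k - 1).choose (d-1)) * h.choose d ^ (k-1) := by
        ring
    _ = (h.choose d * d) * (d*k).choose d * h.choose d ^ (k-1) := by rw [e1, e3]
    _ = d * (h.choose d ^ (k-1) * h.choose d * (d*k).choose d) := by ring
end
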